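/- Assume Σ_{n=2}^∞ Ξ(n)·aₙ ≤ (A−B)(1−γ), and let r₃ = inf_{n≥2} [ (Ξ(n)/((A−B)(1−γ))) · (1−ψ)/(μn) ]^{1/(μn−1)}. Then F_μ is close-to-convex (of bounded turning) of order ψ in |z| < r₃: for every z ∈ 𝕌* with 0 < |z| < r₃ one has Re( F_μ′(z) ) > ψ. -/

import Mathlib

/-!
Every coefficient weight `Ξ(n)` is nonnegative, so `|z| < r₃` gives, for each `n`,
`μn·|z|^{μn-1} < Ξ(n)(1-ψ)/((A-B)(1-γ))`. Multiplying by `aₙ ≥ 0` and summing against the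
coefficient inequality bounds `Σ μn·aₙ|z|^{μn-1}` by `1 - ψ`, strictly because some `aₙ` is
positive (otherwise the sum is `0`). Hence `Re F_μ′(z) ≥ 1 - |Σ μn·aₙ z^{μn-1}| > ψ`.
-/

open Complex

noncomputable def Xi (μ A B γ : ℝ) (k m : ℕ) (ϑ lam : ℕ → ℝ) (n : ℕ) : ℝ :=
  (1 - B) * ((μ * n) ^ k * ϑ n - (μ * n) ^ m * lam n) +
    (A - B) * (1 - γ) * ((μ * n) ^ m * lam n)

noncomputable def Fneg (μ : ℝ) (a : ℕ → ℝ) (z : ℂ) : ℂ :=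
  z - ∑' n : ℕ, (a (n + 2) : ℂ) * z ^ ((μ * (n + 2 : ℕ) : ℝ) : ℂ)

noncomputable def Fder (μ : ℝ) (a : ℕ → ℝ) (z : ℂ) : ℂ :=
  1 - ∑' n : ℕ, ((μ * (n + 2 : ℕ) * a (n + 2) : ℝ) : ℂ) *
    z ^ ((μ * (n + 2 : ℕ) - 1 : ℝ) : ℂ)

lemma Xi_nonneg {μ A B γ : ℝ} {k m : ℕ} {ϑ lam : ℕ → ℝ} {n : ℕ}
    (hμn : 1 ≤ μ * n) (hkm : m ≤ k) (hB : B ≤ 1) (hBA : B ≤ A) (hγ : γ ≤ 1)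
    (hlam : 0 ≤ lam n) (hϑ : lam n ≤ ϑ n) : 0 ≤ Xi μ A B γ k m ϑ lam n := by
  have hpow : (μ * n) ^ m ≤ (μ * n) ^ k := pow_le_pow_right₀ hμn hkm
  have hdiff : (μ * n) ^ m * lam n ≤ (μ * n) ^ k * ϑ n :=
    mul_le_mul hpow hϑ hlam (by positivity)
  exact add_nonneg (mul_nonneg (sub_nonneg.2 hB) (sub_nonneg.2 hdiff))
    (mul_nonneg (mul_nonneg (sub_nonneg.2 hBA) (sub_nonneg.2 hγ))
      (mul_nonneg (pow_nonneg (zero_le_one.trans hμn) m) hlam))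

lemma Real.rpow_lt_of_lt_iInf_rpow_one_div {ι : Type*} {C p : ι → ℝ} {r : ℝ}
    (hC : ∀ i, 0 ≤ C i) (hp : ∀ i, 0 < p i) (hr : 0 ≤ r)
    (h : r < ⨅ i, C i ^ (1 / p i)) (i : ι) : r ^ p i < C i := by
  have hbdd : BddBelow (Set.range fun i => C i ^ (1 / p i)) :=
    ⟨0, by rintro _ ⟨j, rfl⟩; exact Real.rpow_nonneg (hC j) _⟩
  have hi : r < C i ^ (p i)⁻¹ := by simpa only [one_div] using h.trans_le (ciInf_le hbdd i)
  exact (Real.lt_rpow_inv_iff_of_pos hr (hC i) (hp i)).1 hi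

lemma tsum_lt_of_le_of_ne_zero_lt {g h : ℕ → ℝ} {c : ℝ} (hg : ∀ n, 0 ≤ g n)
    (hgh : ∀ n, g n ≤ h n) (hstrict : ∀ n, g n ≠ 0 → g n < h n)
    (hh : Summable h) (hc : 0 < c) (hhc : ∑' n, h n ≤ c) : ∑' n, g n < c := by
  by_cases hzero : ∀ n, g n = 0
  · simpa only [hzero, tsum_zero] using hc
  · push Not at hzero
    obtain ⟨n, hn⟩ := hzero
    have hgsum : Summable g := Summable.of_nonneg_of_le hg hgh hh
    exact (hgsum.tsum_lt_tsum hgh (hstrict n hn) hh).trans_le hhc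

lemma summable_and_tsum_lt_of_lt_div {s a x c : ℕ → ℝ} {b : ℝ} (hs : ∀ n, 0 < s n)
    (ha : ∀ n, 0 ≤ a n) (hx : ∀ n, 0 ≤ x n) (hxc : ∀ n, x n < c n / s n)
    (hca : Summable fun n => c n * a n) (hb : 0 < b) (hcab : ∑' n, c n * a n ≤ b) :
    (Summable fun n => s n * a n * x n) ∧ ∑' n, s n * a n * x n < b := by
  have hle : ∀ n, s n * a n * x n ≤ c n * a n := fun n => by
    have := (lt_div_iff₀' (hs n)).1 (hxc n)
    nlinarith [ha n]
  have hlt : ∀ n, s n * a n * x n ≠ 0 → s n * a n * x n < c n * a n := fun n hn => by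
    have hapos : 0 < a n := (ha n).lt_of_ne fun h => hn (by rw [← h, mul_zero, zero_mul])
    have := (lt_div_iff₀' (hs n)).1 (hxc n)
    nlinarith
  have hnonneg : ∀ n, 0 ≤ s n * a n * x n := fun n =>
    mul_nonneg (mul_nonneg (hs n).le (ha n)) (hx n)
  exact ⟨Summable.of_nonneg_of_le hnonneg hle hca,
    tsum_lt_of_le_of_ne_zero_lt hnonneg hle hlt hca hb hcab⟩

lemma lt_re_one_sub_tsum {f : ℕ → ℂ} {ψ : ℝ} (hf : Summable fun n => ‖f n‖)
    (h : ∑' n, ‖f n‖ < 1 - ψ) : ψ < (1 - ∑' n, f n).re := by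
  have hre : (∑' n, f n).re ≤ ∑' n, ‖f n‖ :=
    (re_le_norm _).trans (norm_tsum_le_tsum_norm hf)
  rw [sub_re, one_re]
  linarith

lemma norm_ofReal_mul_cpow {c : ℝ} (hc : 0 ≤ c) (z : ℂ) (p : ℝ) :
    ‖(c : ℂ) * z ^ (p : ℂ)‖ = c * ‖z‖ ^ p := by
  rw [norm_mul, norm_real, Real.norm_of_nonneg hc, norm_cpow_real]

lemma lt_re_Fder {μ ψ : ℝ} {a : ℕ → ℝ} {z : ℂ} (hμ : 0 ≤ μ) (ha : ∀ n, 0 ≤ a (n + 2))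
    (hf : Summable fun n : ℕ => μ * (n + 2 : ℕ) * a (n + 2) * ‖z‖ ^ (μ * (n + 2 : ℕ) - 1))
    (h : ∑' n : ℕ, μ * (n + 2 : ℕ) * a (n + 2) * ‖z‖ ^ (μ * (n + 2 : ℕ) - 1) < 1 - ψ) :
    ψ < (Fder μ a z).re := by
  have hnorm : ∀ n : ℕ, ‖((μ * (n + 2 : ℕ) * a (n + 2) : ℝ) : ℂ) *
      z ^ ((μ * (n + 2 : ℕ) - 1 : ℝ) : ℂ)‖ = μ * (n + 2 : ℕ) * a (n + 2) * ‖z‖ ^ (μ * (n + 2 : ℕ) - 1) :=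
    fun n => norm_ofReal_mul_cpow (mul_nonneg (by positivity) (ha n)) z _
  simp only [← hnorm] at hf h
  exact lt_re_one_sub_tsum hf h

lemma two_le_mul_natCast_add_two {μ : ℝ} (hμ : 1 ≤ μ) (n : ℕ) : 2 ≤ μ * (n + 2 : ℕ) := by
  have : (2 : ℝ) ≤ (n + 2 : ℕ) := by push_cast; linarith [n.cast_nonneg (α := ℝ)]
  nlinarith

theorem stmt8_general (μ A B γ ψ : ℝ) (k m : ℕ) (a ϑ lam : ℕ → ℝ)
    (hμ : 1 ≤ μ) (hkm : m ≤ k)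
    (hBA : B < A) (hA : A ≤ 1)
    (hγ1 : γ < 1) (hψ1 : ψ < 1)
    (ha : ∀ n, 2 ≤ n → 0 ≤ a n)
    (hlam : ∀ n, 2 ≤ n → 0 ≤ lam n) (hϑ : ∀ n, 2 ≤ n → lam n ≤ ϑ n)
    (hsum : Summable fun n : ℕ => Xi μ A B γ k m ϑ lam (n + 2) * a (n + 2))
    (hle : (∑' n : ℕ, Xi μ A B γ k m ϑ lam (n + 2) * a (n + 2)) ≤ (A - B) * (1 - γ)) :
    ∀ z : ℂ, ‖z‖ < 1 → (¬ ∃ x : ℝ, x ≤ 0 ∧ (x : ℂ) = z) →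
      0 < ‖z‖ →
      ‖z‖ <
        (⨅ n : ℕ, (Xi μ A B γ k m ϑ lam (n + 2) / ((A - B) * (1 - γ)) *
            ((1 - ψ) / (μ * (n + 2 : ℕ)))) ^ ((1 : ℝ) / (μ * (n + 2 : ℕ) - 1))) →
      ψ < (Fder μ a z).re := by
  intro z _ _ _ hr
  set Ξ : ℕ → ℝ := fun n => Xi μ A B γ k m ϑ lam (n + 2)
  set D := (A - B) * (1 - γ)
  have hD : 0 < D := mul_pos (sub_pos.2 hBA) (sub_pos.2 hγ1)
  have hs := two_le_mul_natCast_add_two hμ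
  have ha' : ∀ n, 0 ≤ a (n + 2) := fun n => ha _ (by omega)
  have hΞ : ∀ n, 0 ≤ Ξ n := fun n =>
    Xi_nonneg (by linarith [hs n]) hkm (by linarith) hBA.le hγ1.le
      (hlam _ (by omega)) (hϑ _ (by omega))
  have hzC : ∀ n : ℕ, ‖z‖ ^ (μ * (n + 2 : ℕ) - 1) < (1 - ψ) / D * Ξ n / (μ * (n + 2 : ℕ)) :=
    fun n => by
      convert Real.rpow_lt_of_lt_iInf_rpow_one_div (fun n => mul_nonneg (div_nonneg (hΞ n) hD.le)
        (div_nonneg (by linarith) (by linarith [hs n]))) (fun n => by linarith [hs n])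
        (norm_nonneg z) hr n using 1
      ring
  have hcab : ∑' n, (1 - ψ) / D * Ξ n * a (n + 2) ≤ 1 - ψ := by
    simp only [mul_assoc]
    rw [tsum_mul_left, ← le_div_iff₀' (div_pos (by linarith) hD), div_div_cancel₀ (by linarith)]
    exact hle
  obtain ⟨hsummable, hlt⟩ := summable_and_tsum_lt_of_lt_div (fun n => by linarith [hs n]) ha'
    (fun n => Real.rpow_nonneg (norm_nonneg z) _) hzC
    (by simpa only [mul_assoc] using hsum.mul_left ((1 - ψ) / D)) (by linarith) hcab
  exact lt_re_Fder (by linarith) ha' hsummable hlt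

/-- radius of close-to-convexity/bounded turning: if
`Σ_{n≥2} Ξ(n)aₙ ≤ (A−B)(1−γ)` then, with
`r₃ = inf_{n≥2} [(Ξ(n)/((A−B)(1−γ)))·(1−ψ)/(μn)]^{1/(μn−1)}`, the function `F_μ` is of
bounded turning of order `ψ` for `0 < |z| < r₃` in the slit unit disk:
`Re(F_μ′(z)) > ψ`. -/
theorem stmt8 (μ A B γ ψ : ℝ) (k m : ℕ) (a ϑ lam : ℕ → ℝ)
    (hμ : 1 ≤ μ) (hkm : m ≤ k)
    (hB : -1 ≤ B) (hBA : B < A) (hA : A ≤ 1) (hB0 : B < 0)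
    (hγ0 : 0 ≤ γ) (hγ1 : γ < 1) (hψ0 : 0 ≤ ψ) (hψ1 : ψ < 1)
    (ha : ∀ n, 2 ≤ n → 0 ≤ a n)
    (hlam : ∀ n, 2 ≤ n → 0 ≤ lam n) (hϑ : ∀ n, 2 ≤ n → lam n ≤ ϑ n)
    (hsum : Summable fun n : ℕ => Xi μ A B γ k m ϑ lam (n + 2) * a (n + 2))
    (hle : (∑' n : ℕ, Xi μ A B γ k m ϑ lam (n + 2) * a (n + 2)) ≤ (A - B) * (1 - γ)) :
    ∀ z : ℂ, ‖z‖ < 1 → (¬ ∃ x : ℝ, x ≤ 0 ∧ (x : ℂ) = z) →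
      0 < ‖z‖ →
      ‖z‖ <
        (⨅ n : ℕ, (Xi μ A B γ k m ϑ lam (n + 2) / ((A - B) * (1 - γ)) *
            ((1 - ψ) / (μ * (n + 2 : ℕ)))) ^ ((1 : ℝ) / (μ * (n + 2 : ℕ) - 1))) →
      ψ < (Fder μ a z).re :=
  stmt8_general μ A B γ ψ k m a ϑ lam hμ hkm hBA hA hγ1 hψ1 ha hlam hϑ hsum hle
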